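/- arXiv:1412.2187 — 6 statements merged into one kernel-verified Lean document; each statement's English description precedes it below -/
import Mathlib

section
/- Let ε, r ∈ [0,1] with r < ε and 1 + r - 2ε > 0, and set β₁* = log((ε-r)/(1+r-2ε)) and β₂* = (1/2)log(r(1+r-2ε)/(ε-r)²) (assuming r > 0). Then ε = (e^{β₁*} + e^{2β₁*+2β₂*})/(1 + 2e^{β₁*} + e^{2β₁*+2β₂*}) and r = e^{2β₁*+2β₂*}/(1 + 2e^{β₁*} + e^{2β₁*+2β₂*}). -/
/-! With `d = 1 + r - 2ε`, the choice of `β₁*, β₂*` makes `e^{β₁*} = (ε - r)/d` and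
`e^{2β₁* + 2β₂*} = r/d`, so the partition function `1 + 2e^{β₁*} + e^{2β₁*+2β₂*}` equals `1/d`
and both moment equations become field identities. -/

open Real

lemma exp_two_mul_log_add_two_mul_half_log {a c : ℝ} (ha : 0 < a) (hc : 0 < c) :
    exp (2 * log a + 2 * ((1 / 2) * log c)) = a ^ 2 * c := by
  have hhalf : 2 * ((1 / 2) * log c) = log c := by ring
  rw [hhalf, exp_add, exp_log hc, two_mul, exp_add, exp_log ha]
  ring

lemma moments_eq_of_odds {ε r : ℝ} (hd : 1 + r - 2 * ε ≠ 0) :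
    ε = ((ε - r) / (1 + r - 2 * ε) + r / (1 + r - 2 * ε))
        / (1 + 2 * ((ε - r) / (1 + r - 2 * ε)) + r / (1 + r - 2 * ε)) ∧
    r = r / (1 + r - 2 * ε)
        / (1 + 2 * ((ε - r) / (1 + r - 2 * ε)) + r / (1 + r - 2 * ε)) := by
  have hpartition :
      1 + 2 * ((ε - r) / (1 + r - 2 * ε)) + r / (1 + r - 2 * ε) = 1 / (1 + r - 2 * ε) := by
    field_simp
    ring
  rw [hpartition, one_div, div_inv_eq_mul, div_inv_eq_mul, ← add_div, div_mul_cancel₀ _ hd,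
    div_mul_cancel₀ _ hd]
  exact ⟨by ring, rfl⟩

theorem stmt_5_general (ε r : ℝ)
    (hrpos : 0 < r) (hrε : r < ε) (hfeas : 0 < 1 + r - 2 * ε)
    (β₁ β₂ : ℝ)
    (hβ₁ : β₁ = Real.log ((ε - r) / (1 + r - 2 * ε)))
    (hβ₂ : β₂ = (1 / 2) * Real.log (r * (1 + r - 2 * ε) / (ε - r) ^ 2)) :
    ε = (Real.exp β₁ + Real.exp (2 * β₁ + 2 * β₂))
        / (1 + 2 * Real.exp β₁ + Real.exp (2 * β₁ + 2 * β₂)) ∧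
    r = Real.exp (2 * β₁ + 2 * β₂)
        / (1 + 2 * Real.exp β₁ + Real.exp (2 * β₁ + 2 * β₂)) := by
  have hεr : 0 < ε - r := by linarith
  have hodds : 0 < (ε - r) / (1 + r - 2 * ε) := div_pos hεr hfeas
  have h₁ : exp β₁ = (ε - r) / (1 + r - 2 * ε) := by rw [hβ₁, exp_log hodds]
  have h₂ : exp (2 * β₁ + 2 * β₂) = r / (1 + r - 2 * ε) := by
    rw [hβ₁, hβ₂, exp_two_mul_log_add_two_mul_half_log hodds
      (div_pos (mul_pos hrpos hfeas) (pow_pos hεr 2))]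
    field_simp
  rw [h₁, h₂]
  exact moments_eq_of_odds hfeas.ne'

theorem stmt_5 (ε r : ℝ) (hε : ε ∈ Set.Icc (0:ℝ) 1) (hr : r ∈ Set.Icc (0:ℝ) 1)
    (hrpos : 0 < r) (hrε : r < ε) (hfeas : 0 < 1 + r - 2 * ε)
    (β₁ β₂ : ℝ)
    (hβ₁ : β₁ = Real.log ((ε - r) / (1 + r - 2 * ε)))
    (hβ₂ : β₂ = (1 / 2) * Real.log (r * (1 + r - 2 * ε) / (ε - r) ^ 2)) :
    ε = (Real.exp β₁ + Real.exp (2 * β₁ + 2 * β₂))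
        / (1 + 2 * Real.exp β₁ + Real.exp (2 * β₁ + 2 * β₂)) ∧
    r = Real.exp (2 * β₁ + 2 * β₂)
        / (1 + 2 * Real.exp β₁ + Real.exp (2 * β₁ + 2 * β₂)) :=
  stmt_5_general ε r hrpos hrε hfeas β₁ β₂ hβ₁ hβ₂
end

section
/- For 0 < r < ε and 1 + r − 2ε > 0, the partial derivative of λ(ε,r) with respect to ε equals −log((ε−r)/(1+r−2ε)); consequently λ is nondecreasing in ε if and only if 1 + 2r ≥ 3ε. -/
/-! Splitting the logarithms, `λ(·, r)` is a combination of `log (ε - r)` and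
`log (1 + r - 2ε)` with coefficients affine in `ε`. In its derivative the contributions of
`d/dε log` collapse to `(r - ε)/(ε - r) + (1 + r - 2ε)/(1 + r - 2ε) = 0`, leaving
`-log ((ε - r)/(1 + r - 2ε))`, which is nonnegative exactly when `ε - r ≤ 1 + r - 2ε`. -/

open Real

noncomputable def entropyDensity (ε r : ℝ) : ℝ :=
  -ε * Real.log ((ε - r) / (1 + r - 2 * ε))
    - (r / 2) * Real.log (r * (1 + r - 2 * ε) / (ε - r) ^ 2)
    + (1 / 2) * Real.log (1 / (4 * (1 + r - 2 * ε)))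

lemma entropyDensity_eq_of_ne {ε r : ℝ} (hr : r ≠ 0) (hA : ε - r ≠ 0)
    (hB : 1 + r - 2 * ε ≠ 0) :
    entropyDensity ε r =
      -ε * (log (ε - r) - log (1 + r - 2 * ε))
        - (r / 2) * (log r + log (1 + r - 2 * ε) - 2 * log (ε - r))
        - (1 / 2) * (log 4 + log (1 + r - 2 * ε)) := by
  rw [entropyDensity, log_div hA hB, log_div (mul_ne_zero hr hB) (pow_ne_zero 2 hA),
    log_mul hr hB, log_pow, one_div (4 * _), log_inv, log_mul four_ne_zero hB]
  push_cast
  ring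

theorem hasDerivAt_entropyDensity {ε r : ℝ} (hr : r ≠ 0) (hA : ε - r ≠ 0)
    (hB : 1 + r - 2 * ε ≠ 0) :
    HasDerivAt (fun e => entropyDensity e r) (-log ((ε - r) / (1 + r - 2 * ε))) ε := by
  have hlogA : HasDerivAt (fun e => log (e - r)) (1 / (ε - r)) ε :=
    ((hasDerivAt_id ε).sub_const r).log hA
  have hlogB : HasDerivAt (fun e => log (1 + r - 2 * e)) (-2 / (1 + r - 2 * ε)) ε := by
    simpa using (((hasDerivAt_id ε).const_mul 2).const_sub (1 + r)).log hB
  have hexpanded := (((hasDerivAt_id ε).neg.mul (hlogA.sub hlogB)).sub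
      ((((hasDerivAt_const ε (log r)).add hlogB).sub (hlogA.const_mul 2)).const_mul (r / 2))).sub
    (((hasDerivAt_const ε (log 4)).add hlogB).const_mul (1 / 2))
  have heq : (fun e => entropyDensity e r) =ᶠ[nhds ε] fun e =>
      -e * (log (e - r) - log (1 + r - 2 * e))
        - (r / 2) * (log r + log (1 + r - 2 * e) - 2 * log (e - r))
        - (1 / 2) * (log 4 + log (1 + r - 2 * e)) := by
    filter_upwards [(continuous_sub_right r).continuousAt.eventually_ne hA,
      (continuous_const.sub (continuous_const.mul continuous_id)).continuousAt.eventually_ne hB]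
      with e hAe hBe
    exact entropyDensity_eq_of_ne hr hAe hBe
  refine (hexpanded.congr_of_eventuallyEq heq).congr_deriv ?_
  simp only [Pi.sub_apply, Pi.neg_apply, id]
  calc _ = -(log (ε - r) - log (1 + r - 2 * ε))
          - (ε - r) / (ε - r) + (1 + r - 2 * ε) / (1 + r - 2 * ε) := by ring
    _ = -log ((ε - r) / (1 + r - 2 * ε)) := by
      rw [div_self hA, div_self hB, log_div hA hB]
      ring

theorem stmt_8_general (ε r : ℝ) (hr0 : 0 < r) (hrε : r < ε)
    (hfeas : 0 < 1 + r - 2 * ε) :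
    HasDerivAt (fun e => entropyDensity e r)
      (-Real.log ((ε - r) / (1 + r - 2 * ε))) ε ∧
    (0 ≤ -Real.log ((ε - r) / (1 + r - 2 * ε)) ↔ 3 * ε ≤ 1 + 2 * r) := by
  have hA : 0 < ε - r := sub_pos.2 hrε
  refine ⟨hasDerivAt_entropyDensity hr0.ne' hA.ne' hfeas.ne', ?_⟩
  rw [neg_nonneg, log_nonpos_iff (div_pos hA hfeas).le, div_le_one hfeas]
  constructor <;> intro h <;> linarith

theorem stmt_8 (ε r : ℝ) (hr0 : 0 < r) (hrε : r < ε) (hε1 : ε < 1)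
    (hfeas : 0 < 1 + r - 2 * ε) :
    HasDerivAt (fun e => entropyDensity e r)
      (-Real.log ((ε - r) / (1 + r - 2 * ε))) ε ∧
    (0 ≤ -Real.log ((ε - r) / (1 + r - 2 * ε)) ↔ 3 * ε ≤ 1 + 2 * r) :=
  stmt_8_general ε r hr0 hrε hfeas
end

section
/- For 0 < r < ε and 1 + r − 2ε > 0, the partial derivative of λ(ε,r) with respect to r equals −(1/2) log(r(1+r−2ε)/(ε−r)²); consequently ∂λ/∂r ≥ 0 if and only if r ≤ ε² (i.e., λ is increasing in r below the Erdős–Rényi curve and decreasing above it). -/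
/-!
Each term of `entropyDensity ε` is the logarithm of a rational function of `r`, so the chain rule
gives the derivative; all terms except `-(1/2) log (r(1+r-2ε)/(ε-r)²)` cancel. Its sign is that of
`1 - r(1+r-2ε)/(ε-r)²`, and `r(1+r-2ε) - (ε-r)² = r - ε²`.
-/

open Real

section

variable {ε r : ℝ}

theorem hasDerivAt_entropyDensity_s9 (hr : 0 < r) (hrε : r < ε) (hfeas : 0 < 1 + r - 2 * ε) :
    HasDerivAt (entropyDensity ε)
      (-(1 / 2) * Real.log (r * (1 + r - 2 * ε) / (ε - r) ^ 2)) r := by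
  have ha : ε - r ≠ 0 := (sub_pos.2 hrε).ne'
  have hb : 1 + r - 2 * ε ≠ 0 := hfeas.ne'
  have da : HasDerivAt (fun x => ε - x) (-1) r := by
    simpa using (hasDerivAt_id r).const_sub ε
  have db : HasDerivAt (fun x => 1 + x - 2 * ε) 1 r := by
    simpa using ((hasDerivAt_id r).const_add 1).sub_const (2 * ε)
  have d1 := (da.fun_div db hb).log (div_ne_zero ha hb)
  have d2 := (((hasDerivAt_id' r).fun_mul db).fun_div (da.fun_pow 2) (pow_ne_zero 2 ha)).log
    (div_ne_zero (mul_ne_zero hr.ne' hb) (pow_ne_zero 2 ha))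
  have d3 := ((hasDerivAt_const r (1 : ℝ)).fun_div (db.const_mul 4)
    (mul_ne_zero four_ne_zero hb)).log (one_div_ne_zero (mul_ne_zero four_ne_zero hb))
  refine (((d1.const_mul (-ε)).sub (((hasDerivAt_id' r).div_const 2).fun_mul d2)).add
    (d3.const_mul (1 / 2))).congr_deriv ?_
  field_simp
  ring

theorem mul_div_sq_le_one_iff_le_sq (hrε : r < ε) :
    r * (1 + r - 2 * ε) / (ε - r) ^ 2 ≤ 1 ↔ r ≤ ε ^ 2 := by
  rw [div_le_one (pow_pos (sub_pos.2 hrε) 2)]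
  constructor <;> intro h <;> nlinarith

end

theorem stmt_9_general (ε r : ℝ) (hr0 : 0 < r) (hrε : r < ε)
    (hfeas : 0 < 1 + r - 2 * ε) :
    HasDerivAt (fun r' => entropyDensity ε r')
      (-(1 / 2) * Real.log (r * (1 + r - 2 * ε) / (ε - r) ^ 2)) r ∧
    (0 ≤ -(1 / 2) * Real.log (r * (1 + r - 2 * ε) / (ε - r) ^ 2) ↔ r ≤ ε ^ 2) := by
  refine ⟨hasDerivAt_entropyDensity_s9 hr0 hrε hfeas, ?_⟩
  have hratio : 0 ≤ r * (1 + r - 2 * ε) / (ε - r) ^ 2 :=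
    div_nonneg (mul_nonneg hr0.le hfeas.le) (sq_nonneg _)
  have neg_half_mul_nonneg_iff (x : ℝ) : 0 ≤ -(1 / 2) * x ↔ x ≤ 0 := by
    constructor <;> intro h <;> linarith
  rw [neg_half_mul_nonneg_iff, log_nonpos_iff hratio, mul_div_sq_le_one_iff_le_sq hrε]

theorem stmt_9 (ε r : ℝ) (hr0 : 0 < r) (hrε : r < ε) (hε1 : ε < 1)
    (hfeas : 0 < 1 + r - 2 * ε) :
    HasDerivAt (fun r' => entropyDensity ε r')
      (-(1 / 2) * Real.log (r * (1 + r - 2 * ε) / (ε - r) ^ 2)) r ∧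
    (0 ≤ -(1 / 2) * Real.log (r * (1 + r - 2 * ε) / (ε - r) ^ 2) ↔ r ≤ ε ^ 2) :=
  stmt_9_general ε r hr0 hrε hfeas
end

section
/- For 0 < r < 1 and β₁ ∈ ℝ, with ε* = (e^{β₁}(1+r)+r)/(2e^{β₁}+1), one has r ≤ (ε*)² if and only if β₁ ≥ log(√r/(1−√r)). Consequently the limiting conditional free energy density ψ(β₁,r) is increasing in r exactly when β₁ ≥ log(√r/(1−√r)). -/
/-!
With `s = √r` and `e = exp β₁`, `r ≤ ε²` iff `s ≤ ε`, and
`ε - s = (1 - s) (e (1 - s) - s) / (2e + 1)`, so `s ≤ ε` iff `s / (1 - s) ≤ e`.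
-/

theorem le_div_two_mul_add_one_iff_div_one_sub_le {e s : ℝ} (hD : 0 < 2 * e + 1) (hs : s < 1) :
    s ≤ (e * (1 + s ^ 2) + s ^ 2) / (2 * e + 1) ↔ s / (1 - s) ≤ e := by
  have h1s : 0 < 1 - s := sub_pos.2 hs
  have key : (e * (1 + s ^ 2) + s ^ 2) / (2 * e + 1) - s
      = (1 - s) * (e * (1 - s) - s) / (2 * e + 1) := by
    rw [eq_div_iff hD.ne', sub_mul, div_mul_cancel₀ _ hD.ne']
    ring
  rw [← sub_nonneg, key, le_div_iff₀ hD, zero_mul, mul_nonneg_iff_of_pos_left h1s,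
    sub_nonneg, div_le_iff₀ h1s]

theorem stmt_13 (β₁ r : ℝ) (hr0 : 0 < r) (hr1 : r < 1)
    (ε : ℝ) (hε : ε = (Real.exp β₁ * (1 + r) + r) / (2 * Real.exp β₁ + 1)) :
    r ≤ ε ^ 2 ↔ Real.log (Real.sqrt r / (1 - Real.sqrt r)) ≤ β₁ := by
  set s := Real.sqrt r
  have hs0 : 0 < s := Real.sqrt_pos.2 hr0
  have hs1 : s < 1 := (Real.sqrt_lt' one_pos).2 (by simpa using hr1)
  have hsr : s ^ 2 = r := Real.sq_sqrt hr0.le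
  rw [hε, ← hsr, sq_le_sq₀ hs0.le (by positivity),
    le_div_two_mul_add_one_iff_div_one_sub_le (by positivity) hs1,
    Real.log_le_iff_le_exp (div_pos hs0 (sub_pos.2 hs1))]
end

section
/- For β₂ ≠ 0 and 0 < ε < 1, with r* the smaller root of (e^{2β₂}−1)r² − (2εe^{2β₂}−2ε+1)r + ε²e^{2β₂} = 0, the inequality 1 + 2r* ≥ 3ε holds if and only if ε ≤ (e^{2β₂}+1)/(e^{2β₂}+3). -/
/-!
Write `t = exp (2 β₂)`, `B = t (1 - ε) + ε` and `s` for the square root. Then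
`1 + 2 r* - 3 ε = (B - s) / (t - 1)`, and `B² - s² = (t - 1) (1 - ε) (t + 1 - (t + 3) ε)`,
so the factor `t - 1` cancels and `1 + 2 r* - 3 ε = (1 - ε) (t + 1 - (t + 3) ε) / (B + s)`.
As `B + s > 0`, the sign of `1 + 2 r* - 3 ε` is that of `t + 1 - (t + 3) ε`.
-/

open Real

namespace SmallerRoot

variable {t ε : ℝ}

lemma one_add_two_mul_sub_eq {s r : ℝ} (ht : t ≠ 1)
    (hr : r = (2 * ε * t - 2 * ε + 1 - s) / (2 * (t - 1))) :
    1 + 2 * r - 3 * ε = (t * (1 - ε) + ε - s) / (t - 1) := by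
  have ht' : t - 1 ≠ 0 := sub_ne_zero.mpr ht
  rw [hr]
  field_simp
  ring

lemma sq_sub_discr_eq (t ε : ℝ) :
    (t * (1 - ε) + ε) ^ 2 - ((2 * ε - 1) ^ 2 + 4 * ε * (1 - ε) * t)
      = (t - 1) * ((1 - ε) * (t + 1 - ε * (t + 3))) := by
  ring

lemma mul_one_sub_add_add_sqrt_pos (ht0 : 0 < t) (hε0 : 0 ≤ ε) (hε1 : ε < 1) {x : ℝ} :
    0 < t * (1 - ε) + ε + √x := by
  have := mul_pos ht0 (sub_pos.mpr hε1)
  positivity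

lemma one_add_two_mul_sub_eq_div_pos (ht0 : 0 < t) (ht : t ≠ 1) (hε0 : 0 ≤ ε) (hε1 : ε < 1)
    {r : ℝ} (hr : r = (2 * ε * t - 2 * ε + 1 - √((2 * ε - 1) ^ 2 + 4 * ε * (1 - ε) * t))
      / (2 * (t - 1))) :
    1 + 2 * r - 3 * ε = (1 - ε) * (t + 1 - ε * (t + 3))
      / (t * (1 - ε) + ε + √((2 * ε - 1) ^ 2 + 4 * ε * (1 - ε) * t)) := by
  set s := √((2 * ε - 1) ^ 2 + 4 * ε * (1 - ε) * t)
  have hs : s ^ 2 = (2 * ε - 1) ^ 2 + 4 * ε * (1 - ε) * t :=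
    sq_sqrt (by nlinarith [sq_nonneg (2 * ε - 1), mul_nonneg hε0 ht0.le])
  have hB : 0 < t * (1 - ε) + ε + s := mul_one_sub_add_add_sqrt_pos ht0 hε0 hε1
  have ht' : t - 1 ≠ 0 := sub_ne_zero.mpr ht
  rw [one_add_two_mul_sub_eq ht hr, div_eq_div_iff ht' hB.ne']
  linear_combination sq_sub_discr_eq t ε - hs

theorem three_mul_le_one_add_two_mul_iff (ht0 : 0 < t) (ht : t ≠ 1) (hε0 : 0 ≤ ε) (hε1 : ε < 1)
    {r : ℝ} (hr : r = (2 * ε * t - 2 * ε + 1 - √((2 * ε - 1) ^ 2 + 4 * ε * (1 - ε) * t))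
      / (2 * (t - 1))) :
    3 * ε ≤ 1 + 2 * r ↔ ε ≤ (t + 1) / (t + 3) := by
  rw [← sub_nonneg, one_add_two_mul_sub_eq_div_pos ht0 ht hε0 hε1 hr, mul_div_assoc,
    mul_nonneg_iff_of_pos_left (sub_pos.mpr hε1),
    le_div_iff₀ (mul_one_sub_add_add_sqrt_pos ht0 hε0 hε1), zero_mul,
    le_div_iff₀ (by positivity), sub_nonneg]

end SmallerRoot

theorem stmt_14 (β₂ ε : ℝ) (hβ : β₂ ≠ 0) (h0 : 0 < ε) (h1 : ε < 1)
    (r : ℝ)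
    (hr : r = ((2 * ε * Real.exp (2 * β₂) - 2 * ε + 1)
        - Real.sqrt ((2 * ε - 1) ^ 2 + 4 * ε * (1 - ε) * Real.exp (2 * β₂)))
        / (2 * (Real.exp (2 * β₂) - 1))) :
    3 * ε ≤ 1 + 2 * r ↔ ε ≤ (Real.exp (2 * β₂) + 1) / (Real.exp (2 * β₂) + 3) := by
  have hexp : Real.exp (2 * β₂) ≠ 1 := by
    rw [Ne, Real.exp_eq_one_iff]
    exact mul_ne_zero two_ne_zero hβ
  exact SmallerRoot.three_mul_le_one_add_two_mul_iff (Real.exp_pos _) hexp h0.le h1 hr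
end

section
/- Let αₙ → ∞ be positive and Zₙ(β₁,β₂) = (1 + 2e^{αₙβ₁} + e^{2αₙ(β₁+β₂)})^{n(n-1)/2}. If β₁ < 0 and β₁ + β₂ < 0 then Zₙ^{1/n²} → 1; if β₁ < 0 and β₁ + β₂ = 0 then Zₙ^{1/n²} → √2; if β₁ = 0 and β₂ < 0 then Zₙ^{1/n²} → √3; if β₁ = β₂ = 0 then Zₙ^{1/n²} → 2. -/
/-!
Writing `Zₙ = Bₙ ^ C(n,2)` with `Bₙ = 1 + 2 e^{αₙβ₁} + e^{2αₙ(β₁+β₂)}`, we get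
`Zₙ^{1/n²} = Bₙ^{C(n,2)/n²}` with `C(n,2)/n² → 1/2`, so `Zₙ^{1/n²} → √(lim Bₙ)`.
As `αₙ → ∞`, each exponential in `Bₙ` tends to `0` when its exponent has negative
coefficient and is identically `1` when that coefficient vanishes, so `lim Bₙ` is
`1`, `2`, `3` or `4` in the four cases.
-/

open Real Filter Topology

lemma tendsto_choose_two_div_sq :
    Tendsto (fun n : ℕ => (n.choose 2 : ℝ) / (n : ℝ) ^ 2) atTop (𝓝 (1 / 2)) := by
  have h : Tendsto (fun n : ℕ => (1 - 1 / (n : ℝ)) / 2) atTop (𝓝 ((1 - 0) / 2)) :=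
    (tendsto_const_nhds.sub tendsto_one_div_atTop_nhds_zero_nat).div_const 2
  rw [sub_zero] at h
  refine h.congr' ?_
  filter_upwards [eventually_ne_atTop 0] with n hn
  rw [Nat.cast_choose_two]
  field_simp

lemma tendsto_pow_choose_two_rpow_one_div_sq {B : ℕ → ℝ} {L : ℝ} (hB : ∀ n, 0 ≤ B n)
    (hL : Tendsto B atTop (𝓝 L)) (hL0 : L ≠ 0) :
    Tendsto (fun n : ℕ => (B n ^ n.choose 2) ^ ((1 : ℝ) / (n : ℝ) ^ 2)) atTop (𝓝 (√L)) := by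
  rw [sqrt_eq_rpow]
  refine (hL.rpow tendsto_choose_two_div_sq (Or.inl hL0)).congr fun n => ?_
  rw [div_eq_mul_one_div (n.choose 2 : ℝ), rpow_mul (hB n), rpow_natCast]

lemma tendsto_exp_mul_nhds_zero_of_neg {ι : Type*} {l : Filter ι} {α : ι → ℝ}
    (hα : Tendsto α l atTop) {c : ℝ} (hc : c < 0) :
    Tendsto (fun i => exp (α i * c)) l (𝓝 0) :=
  tendsto_exp_atBot.comp (hα.atTop_mul_const_of_neg hc)

theorem stmt_17_general (β₁ β₂ : ℝ) (α : ℕ → ℝ)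
    (hα : Tendsto α atTop atTop)
    (Z : ℕ → ℝ)
    (hZ : ∀ n, Z n = (1 + 2 * Real.exp (α n * β₁)
        + Real.exp (2 * α n * (β₁ + β₂))) ^ (n.choose 2)) :
    (β₁ < 0 → β₁ + β₂ < 0 →
      Tendsto (fun n : ℕ => (Z n) ^ ((1 : ℝ) / (n : ℝ) ^ 2)) atTop (nhds 1)) ∧
    (β₁ < 0 → β₁ + β₂ = 0 →
      Tendsto (fun n : ℕ => (Z n) ^ ((1 : ℝ) / (n : ℝ) ^ 2)) atTop (nhds (Real.sqrt 2))) ∧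
    (β₁ = 0 → β₂ < 0 →
      Tendsto (fun n : ℕ => (Z n) ^ ((1 : ℝ) / (n : ℝ) ^ 2)) atTop (nhds (Real.sqrt 3))) ∧
    (β₁ = 0 → β₂ = 0 →
      Tendsto (fun n : ℕ => (Z n) ^ ((1 : ℝ) / (n : ℝ) ^ 2)) atTop (nhds 2)) := by
  have key : ∀ l₁ l₂ : ℝ, 0 ≤ l₁ → 0 ≤ l₂ →
      Tendsto (fun n => exp (α n * β₁)) atTop (𝓝 l₁) →
      Tendsto (fun n => exp (α n * (2 * (β₁ + β₂)))) atTop (𝓝 l₂) →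
      Tendsto (fun n : ℕ => (Z n) ^ ((1 : ℝ) / (n : ℝ) ^ 2)) atTop (𝓝 √(1 + 2 * l₁ + l₂)) := by
    intro l₁ l₂ hl₁ hl₂ h₁ h₂
    simp only [hZ, show ∀ n, 2 * α n * (β₁ + β₂) = α n * (2 * (β₁ + β₂)) by intro; ring]
    exact tendsto_pow_choose_two_rpow_one_div_sq (fun n => by positivity)
      ((tendsto_const_nhds.add (h₁.const_mul 2)).add h₂) (by positivity)
  have decay {c : ℝ} (hc : c < 0) := tendsto_exp_mul_nhds_zero_of_neg hα hc
  refine ⟨fun h₁ h₂ => ?_, fun h₁ h₂ => ?_, fun h₁ h₂ => ?_, fun h₁ h₂ => ?_⟩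
  · convert key 0 0 le_rfl le_rfl (decay h₁) (decay (by linarith)) using 2
    norm_num
  · convert key 0 1 le_rfl zero_le_one (decay h₁) (by simp [h₂]) using 2
    norm_num
  · convert key 1 0 zero_le_one le_rfl (by simp [h₁]) (decay (by linarith)) using 2
    norm_num
  · convert key 1 1 zero_le_one zero_le_one (by simp [h₁]) (by simp [h₁, h₂]) using 2
    rw [show (1 + 2 * 1 + 1 : ℝ) = 2 ^ 2 by norm_num, sqrt_sq zero_le_two]

theorem stmt_17 (β₁ β₂ : ℝ) (α : ℕ → ℝ) (hαpos : ∀ n, 0 < α n)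
    (hα : Tendsto α atTop atTop)
    (Z : ℕ → ℝ)
    (hZ : ∀ n, Z n = (1 + 2 * Real.exp (α n * β₁)
        + Real.exp (2 * α n * (β₁ + β₂))) ^ (n.choose 2)) :
    (β₁ < 0 → β₁ + β₂ < 0 →
      Tendsto (fun n : ℕ => (Z n) ^ ((1 : ℝ) / (n : ℝ) ^ 2)) atTop (nhds 1)) ∧
    (β₁ < 0 → β₁ + β₂ = 0 →
      Tendsto (fun n : ℕ => (Z n) ^ ((1 : ℝ) / (n : ℝ) ^ 2)) atTop (nhds (Real.sqrt 2))) ∧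
    (β₁ = 0 → β₂ < 0 →
      Tendsto (fun n : ℕ => (Z n) ^ ((1 : ℝ) / (n : ℝ) ^ 2)) atTop (nhds (Real.sqrt 3))) ∧
    (β₁ = 0 → β₂ = 0 →
      Tendsto (fun n : ℕ => (Z n) ^ ((1 : ℝ) / (n : ℝ) ^ 2)) atTop (nhds 2)) :=
  stmt_17_general β₁ β₂ α hα Z hZ
end
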